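/- Let N ≥ 1, let f : B^N → B^N be holomorphic, and let p, q ∈ ∂B^N with p ≠ q. Suppose c > 0 and α > 0 are such that f(H(p,R)) ⊆ H(p,cR) for every R > 0 and f(H(q,R)) ⊆ H(q,αR) for every R > 0. Then cα ≥ 1; in particular, if c < 1 then α > 1. -/

import Mathlib

noncomputable section

open Filter Topology

/-- The open unit ball `B^N = {Z ∈ ℂ^N : ‖Z‖ < 1}`. -/
def unitBall (N : ℕ) : Set (EuclideanSpace ℂ (Fin N)) := {Z | ‖Z‖ < 1}

/-- The Hermitian inner product `⟨Z,W⟩ = Σ_j Z_j * conj (W_j)` of the paper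
(which is `inner W Z` in Mathlib's conjugate-linear-in-the-first-slot convention). -/
def hip {N : ℕ} (Z W : EuclideanSpace ℂ (Fin N)) : ℂ := inner ℂ W Z

/-- The pseudo-hyperbolic distance on the unit ball `B^N`:
the number `d(Z,W) ∈ [0,1)` with `d(Z,W)² = 1 − (1−‖Z‖²)(1−‖W‖²)/|1−⟨Z,W⟩|²`. -/
def phd {N : ℕ} (Z W : EuclideanSpace ℂ (Fin N)) : ℝ :=
  Real.sqrt (1 - (1 - ‖Z‖ ^ 2) * (1 - ‖W‖ ^ 2) / ‖(1 : ℂ) - hip Z W‖ ^ 2)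

/-- The horosphere `H(X,R) = {Z ∈ B^N : |1−⟨Z,X⟩|² < R(1−‖Z‖²)}`. -/
def horo {N : ℕ} (X : EuclideanSpace ℂ (Fin N)) (R : ℝ) :
    Set (EuclideanSpace ℂ (Fin N)) :=
  {Z | ‖Z‖ < 1 ∧ ‖(1 : ℂ) - hip Z X‖ ^ 2 < R * (1 - ‖Z‖ ^ 2)}

/-- The Koranyi region `K(q,M) = {Z ∈ B^N : |1−⟨Z,q⟩| < M(1−‖Z‖)}`. -/
def koranyi {N : ℕ} (q : EuclideanSpace ℂ (Fin N)) (M : ℝ) :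
    Set (EuclideanSpace ℂ (Fin N)) :=
  {Z | ‖Z‖ < 1 ∧ ‖(1 : ℂ) - hip Z q‖ < M * (1 - ‖Z‖)}

/-!
Julia's lemma at a boundary point `X` says that `Z ↦ |1 - ⟨Z,X⟩|² / (1 - ‖Z‖²)` is multiplied by
at most the Julia constant under `f`. Hence the product `g` of these quotients for `p` and `q`
satisfies `g ∘ f ≤ cα g` on the ball. Since `p ≠ q`, a point of the ball cannot be close to both
boundary points, and `g` is bounded below by a positive constant there. Comparing with the
infimum of `g` forces `cα ≥ 1`.
-/

theorem one_le_of_comp_le_mul {X : Type*} {S : Set X} {f : X → X} {g : X → ℝ} {k m : ℝ}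
    (hS : S.Nonempty) (hf : Set.MapsTo f S S) (hm : 0 < m) (hgm : ∀ z ∈ S, m ≤ g z)
    (hgf : ∀ z ∈ S, g (f z) ≤ k * g z) : 1 ≤ k := by
  set μ := sInf (g '' S)
  have hμm : m ≤ μ := le_csInf (hS.image g) (Set.forall_mem_image.2 hgm)
  have hμ : 0 < μ := hm.trans_le hμm
  have hμf : ∀ z ∈ S, μ ≤ k * g z := fun z hz =>
    (csInf_le ⟨m, Set.forall_mem_image.2 hgm⟩ (Set.mem_image_of_mem g (hf hz))).trans (hgf z hz)
  obtain ⟨z₀, hz₀⟩ := hS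
  have hk : 0 < k := pos_of_mul_pos_left (hμ.trans_le (hμf z₀ hz₀)) (hm.trans_le (hgm z₀ hz₀)).le
  have hμk : μ / k ≤ μ := le_csInf ⟨_, Set.mem_image_of_mem g hz₀⟩
    (Set.forall_mem_image.2 fun z hz => (div_le_iff₀' hk).2 (hμf z hz))
  rw [div_le_iff₀ hk] at hμk
  exact (le_mul_iff_one_le_right hμ).1 hμk

theorem one_sub_sq_norm_pos {E : Type*} [SeminormedAddCommGroup E] {Z : E} (hZ : ‖Z‖ < 1) :
    0 < 1 - ‖Z‖ ^ 2 := by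
  nlinarith [norm_nonneg Z]

section Ball

variable {N : ℕ}

def horoRatio (X Z : EuclideanSpace ℂ (Fin N)) : ℝ :=
  ‖(1 : ℂ) - hip Z X‖ ^ 2 / (1 - ‖Z‖ ^ 2)

theorem horoRatio_nonneg (X : EuclideanSpace ℂ (Fin N)) {Z : EuclideanSpace ℂ (Fin N)}
    (hZ : ‖Z‖ < 1) : 0 ≤ horoRatio X Z :=
  div_nonneg (sq_nonneg _) (one_sub_sq_norm_pos hZ).le

theorem mem_horo_iff {X Z : EuclideanSpace ℂ (Fin N)} {R : ℝ} (hZ : ‖Z‖ < 1) :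
    Z ∈ horo X R ↔ horoRatio X Z < R := by
  simp only [horo, horoRatio, Set.mem_ofPred_eq, hZ, true_and, div_lt_iff₀ (one_sub_sq_norm_pos hZ)]

theorem horoRatio_apply_le {f : EuclideanSpace ℂ (Fin N) → EuclideanSpace ℂ (Fin N)}
    (hf : Set.MapsTo f (unitBall N) (unitBall N)) {X : EuclideanSpace ℂ (Fin N)} {γ : ℝ}
    (hJ : ∀ R : ℝ, 0 < R → f '' horo X R ⊆ horo X (γ * R))
    {Z : EuclideanSpace ℂ (Fin N)} (hZ : ‖Z‖ < 1) :
    horoRatio X (f Z) ≤ γ * horoRatio X Z := by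
  have hfZ : ‖f Z‖ < 1 := hf hZ
  have hlim : Tendsto (γ * ·) (𝓝[>] horoRatio X Z) (𝓝 (γ * horoRatio X Z)) :=
    ((continuous_const_mul γ).tendsto _).mono_left nhdsWithin_le_nhds
  refine ge_of_tendsto hlim ?_
  filter_upwards [self_mem_nhdsWithin] with R (hR : horoRatio X Z < R)
  have hR0 : 0 < R := (horoRatio_nonneg X hZ).trans_lt hR
  exact ((mem_horo_iff hfZ).1 (hJ R hR0 ⟨Z, (mem_horo_iff hZ).2 hR, rfl⟩)).le

/-- Comes from the identity `2 Re (1 - ⟨Z,X⟩) = ‖Z - X‖² + (1 - ‖Z‖²)` for `‖X‖ = 1`. -/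
theorem sq_norm_sub_add_one_sub_sq_norm_le {X : EuclideanSpace ℂ (Fin N)} (hX : ‖X‖ = 1)
    (Z : EuclideanSpace ℂ (Fin N)) :
    ‖Z - X‖ ^ 2 + (1 - ‖Z‖ ^ 2) ≤ 2 * ‖(1 : ℂ) - hip Z X‖ := by
  rw [norm_sub_sq (𝕜 := ℂ) Z X, hX, inner_re_symm (𝕜 := ℂ) Z X]
  have hre := Complex.re_le_norm ((1 : ℂ) - hip Z X)
  simp only [hip, Complex.sub_re, Complex.one_re, RCLike.re_to_complex] at hre ⊢
  linarith

theorem sq_div_le_horoRatio_mul_horoRatio {p q : EuclideanSpace ℂ (Fin N)} (hp : ‖p‖ = 1)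
    (hq : ‖q‖ = 1) {Z : EuclideanSpace ℂ (Fin N)} (hZ : ‖Z‖ < 1) :
    (‖p - q‖ ^ 2 / 8) ^ 2 ≤ horoRatio p Z * horoRatio q Z := by
  have hA := sq_norm_sub_add_one_sub_sq_norm_le hp Z
  have hB := sq_norm_sub_add_one_sub_sq_norm_le hq Z
  have htri : ‖p - q‖ ≤ ‖Z - p‖ + ‖Z - q‖ := by
    simpa only [norm_sub_rev p Z] using norm_sub_le_norm_sub_add_norm_sub p Z q
  set s := 1 - ‖Z‖ ^ 2
  set A := ‖(1 : ℂ) - hip Z p‖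
  set B := ‖(1 : ℂ) - hip Z q‖
  set a := ‖Z - p‖
  set b := ‖Z - q‖
  have hs : 0 < s := one_sub_sq_norm_pos hZ
  -- `4AB ≥ (a² + s)(b² + s) ≥ s (a² + b²) ≥ s ‖p - q‖² / 2`
  have hAB : ‖p - q‖ ^ 2 / 8 ≤ A * B / s := by
    rw [le_div_iff₀ hs]
    nlinarith [mul_le_mul hA hB (by positivity) (by positivity),
      mul_le_mul_of_nonneg_left (pow_le_pow_left₀ (norm_nonneg _) htri 2) hs.le,
      mul_nonneg hs.le (sq_nonneg (a - b)), mul_pos hs hs, sq_nonneg (a * b)]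
  calc (‖p - q‖ ^ 2 / 8) ^ 2 ≤ (A * B / s) ^ 2 := pow_le_pow_left₀ (by positivity) hAB 2
    _ = horoRatio p Z * horoRatio q Z := by simp only [horoRatio, A, B, s]; ring

end Ball

theorem stmt3_general {N : ℕ}
    (f : EuclideanSpace ℂ (Fin N) → EuclideanSpace ℂ (Fin N))
    (hmaps : Set.MapsTo f (unitBall N) (unitBall N))
    (p q : EuclideanSpace ℂ (Fin N)) (hp : ‖p‖ = 1) (hq : ‖q‖ = 1) (hpq : p ≠ q)
    (c α : ℝ) (hα : 0 < α)
    (hJp : ∀ R : ℝ, 0 < R → f '' horo p R ⊆ horo p (c * R))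
    (hJq : ∀ R : ℝ, 0 < R → f '' horo q R ⊆ horo q (α * R)) :
    1 ≤ c * α ∧ (c < 1 → 1 < α) := by
  have hdist : 0 < ‖p - q‖ := norm_pos_iff.2 (sub_ne_zero.2 hpq)
  have hcα : 1 ≤ c * α := by
    refine one_le_of_comp_le_mul (S := unitBall N) (g := fun Z => horoRatio p Z * horoRatio q Z)
      ⟨0, by simp [unitBall]⟩ hmaps (by positivity : 0 < (‖p - q‖ ^ 2 / 8) ^ 2)
      (fun Z hZ => sq_div_le_horoRatio_mul_horoRatio hp hq hZ) fun Z hZ => ?_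
    calc horoRatio p (f Z) * horoRatio q (f Z)
        ≤ (c * horoRatio p Z) * (α * horoRatio q Z) :=
          mul_le_mul_of_nonneg (horoRatio_apply_le hmaps hJp hZ) (horoRatio_apply_le hmaps hJq hZ)
            (horoRatio_nonneg p (hmaps hZ)) (mul_nonneg hα.le (horoRatio_nonneg q hZ))
      _ = c * α * (horoRatio p Z * horoRatio q Z) := by ring
  exact ⟨hcα, fun hc => by nlinarith⟩

/-- if a holomorphic `f : B^N → B^N` satisfies Julia's lemma at two distinct
boundary points `p ≠ q` with constants `c > 0` and `α > 0` respectively, then `cα ≥ 1`;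
in particular, if `c < 1` then `α > 1`. -/
theorem stmt3 {N : ℕ} (hN : 1 ≤ N)
    (f : EuclideanSpace ℂ (Fin N) → EuclideanSpace ℂ (Fin N))
    (hmaps : Set.MapsTo f (unitBall N) (unitBall N))
    (hhol : DifferentiableOn ℂ f (unitBall N))
    (p q : EuclideanSpace ℂ (Fin N)) (hp : ‖p‖ = 1) (hq : ‖q‖ = 1) (hpq : p ≠ q)
    (c α : ℝ) (hc : 0 < c) (hα : 0 < α)
    (hJp : ∀ R : ℝ, 0 < R → f '' horo p R ⊆ horo p (c * R))
    (hJq : ∀ R : ℝ, 0 < R → f '' horo q R ⊆ horo q (α * R)) :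
    1 ≤ c * α ∧ (c < 1 → 1 < α) :=
  stmt3_general f hmaps p q hp hq hpq c α hα hJp hJq
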